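/- arXiv:2401.02189 — 11 statements merged into one kernel-verified Lean document; each statement's English description precedes it below -/
import Mathlib

section
/- A ring R is a CSNC ring (i.e., every clean element of R is strongly nil-clean) if and only if for every clean element a of R, the element a - a^2 is nilpotent. -/
/-- An element `a` of a ring is *clean* if `a = e + u` for some idempotent `e` and unit `u`. -/
def IsCleanElem {R : Type*} [Ring R] (a : R) : Prop :=
  ∃ e u : R, IsIdempotentElem e ∧ IsUnit u ∧ a = e + u

/-- An element `a` of a ring is *strongly nil-clean* if `a = e + q` for some idempotent `e`
and nilpotent `q` with `e * q = q * e`. -/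
def IsStronglyNilCleanElem {R : Type*} [Ring R] (a : R) : Prop :=
  ∃ e q : R, IsIdempotentElem e ∧ IsNilpotent q ∧ e * q = q * e ∧ a = e + q

/-- A ring is a *CSNC ring* if every clean element is strongly nil-clean. -/
def IsCSNCRing (R : Type*) [Ring R] : Prop :=
  ∀ a : R, IsCleanElem a → IsStronglyNilCleanElem a

/-! The condition is elementwise: an element `a` of any ring is strongly nil-clean exactly when
`a - a ^ 2` is nilpotent. If `a = e + q` with `e` idempotent and `q` nilpotent commuting with `e`,
then `a - a ^ 2 = q * (1 - 2 * e - q)` is a nilpotent times a commuting element. Conversely, if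
`(a - a ^ 2) ^ n = 0` with `n ≠ 0`, the polynomial `P = 1 - (1 - X ^ n) ^ n` gives an idempotent
`e = P(a)` commuting with `a`, and `a - e` is nilpotent because `X - P` is divisible by both `X`
and `1 - X`, so that `(X - X ^ 2) ^ n ∣ (X - P) ^ (2 * n)`. -/

open Polynomial

lemma X_sub_X_sq_pow_dvd_X_sub_one_sub_one_sub_X_pow_pow {n : ℕ} (hn : n ≠ 0) :
    ((X : ℤ[X]) - X ^ 2) ^ n ∣ (X - (1 - (1 - X ^ n) ^ n)) ^ (2 * n) := by
  have hX : (X : ℤ[X]) ∣ X - (1 - (1 - X ^ n) ^ n) := by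
    refine dvd_sub dvd_rfl ((dvd_pow_self X hn).trans ?_)
    have := sub_dvd_pow_sub_pow (1 : ℤ[X]) (1 - X ^ n) n
    rwa [sub_sub_cancel, one_pow] at this
  have hX' : (1 - X : ℤ[X]) ∣ X - (1 - (1 - X ^ n) ^ n) := by
    rw [show (X : ℤ[X]) - (1 - (1 - X ^ n) ^ n) = (1 - X ^ n) ^ n - (1 - X) by ring]
    refine dvd_sub (Dvd.dvd.trans ?_ (dvd_pow_self _ hn)) dvd_rfl
    simpa using sub_dvd_pow_sub_pow (1 : ℤ[X]) X n
  rw [pow_mul, sq (X - _)]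
  exact pow_dvd_pow_of_dvd (by simpa [mul_one_sub, ← sq] using mul_dvd_mul hX hX') n

section

variable {R : Type*} [Ring R]

theorem IsStronglyNilCleanElem.isNilpotent_sub_sq {a : R} (ha : IsStronglyNilCleanElem a) :
    IsNilpotent (a - a ^ 2) := by
  obtain ⟨e, q, he, hq, hc, rfl⟩ := ha
  have hqe : Commute q e := hc.symm
  have : e + q - (e + q) ^ 2 = q * (1 - 2 * e - q) := by
    rw [sq, add_mul, mul_add, mul_add, he.eq, hc, mul_sub, mul_sub, mul_one, two_mul, mul_add]
    abel
  rw [this]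
  refine Commute.isNilpotent_mul_right ?_ hq
  exact ((Commute.one_right q).sub_right ((Commute.ofNat_right q 2).mul_right hqe)).sub_right
    (Commute.refl q)

theorem isStronglyNilCleanElem_of_isNilpotent_sub_sq {a : R} (ha : IsNilpotent (a - a ^ 2)) :
    IsStronglyNilCleanElem a := by
  obtain ⟨n, hn0, hn⟩ : ∃ n ≠ 0, (a - a ^ 2) ^ n = 0 := by
    obtain ⟨n, hn⟩ := ha
    exact ⟨n + 1, n.succ_ne_zero, by rw [pow_succ, hn, zero_mul]⟩
  have he : aeval a (1 - (1 - X ^ n) ^ n : ℤ[X]) = 1 - (1 - a ^ n) ^ n := by simp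
  have hcomm : Commute a (1 - (1 - a ^ n) ^ n) := by
    rw [← he]
    simpa only [aeval_X] using (Commute.all (X : ℤ[X]) (1 - (1 - X ^ n) ^ n)).map (aeval a)
  refine ⟨_, a - (1 - (1 - a ^ n) ^ n), isIdempotentElem_one_sub_one_sub_pow_pow a n hn,
    ⟨2 * n, ?_⟩, (hcomm.symm.sub_right (Commute.refl _)).eq, by abel⟩
  simpa [hn] using map_dvd (aeval a) (X_sub_X_sq_pow_dvd_X_sub_one_sub_one_sub_X_pow_pow hn0)

theorem isStronglyNilCleanElem_iff_isNilpotent_sub_sq {a : R} :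
    IsStronglyNilCleanElem a ↔ IsNilpotent (a - a ^ 2) :=
  ⟨IsStronglyNilCleanElem.isNilpotent_sub_sq, isStronglyNilCleanElem_of_isNilpotent_sub_sq⟩

end

theorem stmt_0 (R : Type*) [Ring R] :
    IsCSNCRing R ↔ ∀ a : R, IsCleanElem a → IsNilpotent (a - a ^ 2) :=
  forall₂_congr fun _ _ ↦ isStronglyNilCleanElem_iff_isNilpotent_sub_sq
end

section
/- A ring R is a CSNC ring if and only if for every clean element a of R there exists a unique idempotent e of R such that a - e is nilpotent and ae = ea. -/
open Polynomial

theorem Polynomial.X_sub_X_sq_dvd_X_sub_one_sub_one_sub_X_pow_pow {R : Type*} [CommRing R]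
    {m : ℕ} (hm : m ≠ 0) : (X - X ^ 2 : R[X]) ∣ X - (1 - (1 - X ^ m) ^ m) := by
  set P : R[X] := 1 - (1 - X ^ m) ^ m
  have hX : X ∣ P := by
    have h := sub_dvd_pow_sub_pow (1 : R[X]) (1 - X ^ m) m
    rw [sub_sub_cancel, one_pow] at h
    exact (dvd_pow_self X hm).trans h
  have hOneSubX : 1 - X ∣ 1 - P := by
    have h := sub_dvd_pow_sub_pow (1 : R[X]) X m
    rw [one_pow] at h
    rw [sub_sub_cancel]
    exact h.trans (dvd_pow_self _ hm)
  have hsplit : X - P = X * (1 - P) - P * (1 - X) := by ring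
  rw [hsplit, show (X - X ^ 2 : R[X]) = X * (1 - X) by ring]
  exact dvd_sub (mul_dvd_mul_left X hOneSubX) (mul_dvd_mul hX dvd_rfl)

theorem Polynomial.isNilpotent_aeval_of_dvd {R A : Type*} [CommRing R] [Ring A] [Algebra R A]
    {p q : R[X]} (hpq : p ∣ q) {a : A} (hp : IsNilpotent (aeval a p)) :
    IsNilpotent (aeval a q) := by
  obtain ⟨r, rfl⟩ := hpq
  rw [map_mul]
  exact ((Commute.all p r).map (aeval a)).isNilpotent_mul_right hp

section Ring

variable {R : Type*} [Ring R]

theorem isNilpotent_sub_one_sub_one_sub_pow_pow {a : R} (ha : IsNilpotent (a - a ^ 2))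
    {m : ℕ} (hm : m ≠ 0) : IsNilpotent (a - (1 - (1 - a ^ m) ^ m)) := by
  simpa using isNilpotent_aeval_of_dvd (R := ℤ) (a := a)
    (X_sub_X_sq_dvd_X_sub_one_sub_one_sub_X_pow_pow hm) (by simpa using ha)

theorem exists_isIdempotentElem_isNilpotent_sub_of_isNilpotent_sub_sq {a : R}
    (ha : IsNilpotent (a - a ^ 2)) :
    ∃ g : R, IsIdempotentElem g ∧ IsNilpotent (a - g) ∧
      ∀ y : R, Commute y a → Commute y g := by
  obtain ⟨n, hn⟩ := ha
  have hm : (a - a ^ 2) ^ (n + 1) = 0 := by rw [pow_succ, hn, zero_mul]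
  refine ⟨1 - (1 - a ^ (n + 1)) ^ (n + 1), isIdempotentElem_one_sub_one_sub_pow_pow a _ hm,
    isNilpotent_sub_one_sub_one_sub_pow_pow ⟨n, hn⟩ n.succ_ne_zero, fun y hy => ?_⟩
  exact (Commute.one_right y).sub_right
    (((Commute.one_right y).sub_right (hy.pow_right _)).pow_right _)

theorem IsIdempotentElem.isNilpotent_sub_sq {a e : R} (he : IsIdempotentElem e)
    (hae : Commute a e) (h : IsNilpotent (a - e)) : IsNilpotent (a - a ^ 2) := by
  have hfactor : a - a ^ 2 = (a - e) * (1 - a - e) := by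
    simp only [sq, mul_sub, sub_mul, mul_one, he.eq, hae.eq]
    abel
  have hcomm : Commute (a - e) (1 - a - e) :=
    (((Commute.one_right a).sub_right (Commute.refl a)).sub_right hae).sub_left
      (((Commute.one_right e).sub_right hae.symm).sub_right (Commute.refl e))
  rw [hfactor]
  exact hcomm.isNilpotent_mul_right h

theorem IsIdempotentElem.eq_of_isNilpotent_sub_of_commute {a e f : R}
    (he : IsIdempotentElem e) (hf : IsIdempotentElem f) (hae : IsNilpotent (a - e))
    (haf : IsNilpotent (a - f)) (hce : Commute a e) (hcf : Commute a f) (hef : Commute e f) :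
    e = f := by
  have hcomm : Commute (a - f) (a - e) :=
    ((Commute.refl a).sub_right hce).sub_left (hcf.symm.sub_right hef.symm)
  refine eq_of_isNilpotent_sub_of_isIdempotentElem_of_commute he hf ?_ hef
  rw [← sub_sub_sub_cancel_left f e a]
  exact hcomm.isNilpotent_sub haf hae

theorem existsUnique_isIdempotentElem_isNilpotent_sub_of_exists {a : R}
    (h : ∃ e : R, IsIdempotentElem e ∧ IsNilpotent (a - e) ∧ a * e = e * a) :
    ∃! e : R, IsIdempotentElem e ∧ IsNilpotent (a - e) ∧ a * e = e * a := by
  obtain ⟨e, he, hae, hce⟩ := h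
  obtain ⟨g, hg, hag, hgc⟩ :=
    exists_isIdempotentElem_isNilpotent_sub_of_isNilpotent_sub_sq (he.isNilpotent_sub_sq hce hae)
  have eq_g : ∀ f : R, IsIdempotentElem f → IsNilpotent (a - f) → Commute a f → f = g :=
    fun f hf haf hcf => hf.eq_of_isNilpotent_sub_of_commute hg haf hag hcf
      (hgc a (Commute.refl a)) (hgc f hcf.symm)
  refine ⟨e, ⟨he, hae, hce⟩, fun f ⟨hf, haf, hcf⟩ => ?_⟩
  rw [eq_g f hf haf hcf, eq_g e he hae hce]

theorem isStronglyNilCleanElem_iff {a : R} :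
    IsStronglyNilCleanElem a ↔
      ∃ e : R, IsIdempotentElem e ∧ IsNilpotent (a - e) ∧ a * e = e * a := by
  constructor
  · rintro ⟨e, q, he, hq, hcomm, rfl⟩
    refine ⟨e, he, by simpa using hq, ?_⟩
    rw [add_mul, mul_add, he.eq, hcomm]
  · rintro ⟨e, he, hae, hce⟩
    refine ⟨e, a - e, he, hae, ?_, by abel⟩
    rw [mul_sub, sub_mul, ← hce, he.eq]

end Ring

theorem stmt_1 (R : Type*) [Ring R] :
    IsCSNCRing R ↔
      ∀ a : R, IsCleanElem a →
        ∃! e : R, IsIdempotentElem e ∧ IsNilpotent (a - e) ∧ a * e = e * a := by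
  refine forall₂_congr fun a _ => ?_
  rw [isStronglyNilCleanElem_iff]
  exact ⟨existsUnique_isIdempotentElem_isNilpotent_sub_of_exists, ExistsUnique.exists⟩
end

section
/- If R is a CSNC ring, then the element 2 (= 1 + 1) of R is nilpotent. -/
theorem stmt_2 (R : Type*) [Ring R] (h : IsCSNCRing R) : IsNilpotent (2 : R) := by
  obtain ⟨e, q, he, hq, hc, h2⟩ :=
    h 2 ⟨1, 1, by simp [IsIdempotentElem], isUnit_one, by norm_num⟩
  have heq : e = 2 - q := by rw [h2, add_sub_cancel_right]
  have h' : (2 - q) * (2 - q) = 2 - q := by rw [← heq]; exact he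
  have key : (1 - q) * (2 - q) = (1 - q) * 0 := by
    have h1 : (1 : R) - q = (2 - q) - 1 := by rw [sub_right_comm]; norm_num
    rw [h1, sub_mul, one_mul, h', sub_self, mul_zero]
  have hu : IsUnit (1 - q) := IsNilpotent.isUnit_one_sub hq
  have hz : (2 : R) - q = 0 := hu.mul_left_cancel key
  have : (2 : R) = q := by rwa [sub_eq_zero] at hz
  rwa [this]
end

section
/- If R is a CSNC ring, then the Jacobson radical J(R) of R is a nil ideal, i.e., every element of J(R) is nilpotent. -/
private lemma isUnit_one_add_of_mem_jacobson {R : Type*} [Ring R]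
    {x : R} (hx : x ∈ (⊥ : Ideal R).jacobson) : IsUnit (1 + x) := by
  have key : ∀ y ∈ (⊥ : Ideal R).jacobson, ∃ z, z * (1 + y) = 1 := by
    intro y hy
    obtain ⟨z, hz⟩ := Ideal.mem_jacobson_iff.1 hy 1
    rw [Ideal.mem_bot, sub_eq_zero, mul_one] at hz
    exact ⟨z, by rw [mul_add, mul_one, add_comm]; exact hz⟩
  obtain ⟨z, hz⟩ := key x hx
  have hzx : -(z * x) ∈ (⊥ : Ideal R).jacobson :=
    neg_mem (Ideal.mul_mem_left _ z hx)
  obtain ⟨z', hz'⟩ := key _ hzx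
  have hzz' : z' * z = 1 := by
    have hz2 : z + z * x = 1 := by rw [← hz, mul_add, mul_one]
    have hzeq : z = 1 + -(z * x) := by
      have h3 := eq_sub_of_add_eq hz2
      rw [sub_eq_add_neg] at h3
      exact h3
    rw [← hzeq] at hz'
    exact hz'
  have hz'eq : z' = 1 + x := by
    calc z' = z' * (z * (1 + x)) := by rw [hz, mul_one]
    _ = (z' * z) * (1 + x) := by rw [mul_assoc]
    _ = 1 + x := by rw [hzz', one_mul]
  exact ⟨⟨1 + x, z, by rw [← hz'eq]; exact hzz', hz⟩, rfl⟩

theorem stmt_3 (R : Type*) [Ring R] (h : IsCSNCRing R) :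
    ∀ a ∈ (⊥ : Ideal R).jacobson, IsNilpotent a := by
  intro a ha
  have hu : IsUnit (a - 1) := by
    have : IsUnit (1 + -a) := isUnit_one_add_of_mem_jacobson (neg_mem ha)
    have := this.neg
    simpa [neg_add, sub_eq_add_neg, add_comm] using this
  have hclean : IsCleanElem a := ⟨1, a - 1, IsIdempotentElem.one, hu, by abel⟩
  obtain ⟨e, q, he, ⟨n, hqn⟩, hcomm, heq⟩ := h a hclean
  -- e commutes with a
  have hea : e * a = a * e := by
    rw [heq, mul_add, add_mul, he.eq, hcomm]
  -- e * (a - 1) = e * q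
  have h1 : e * (a - 1) = e * q := by
    have : e * a = e + e * q := by rw [heq, mul_add, he.eq]
    rw [mul_sub, mul_one, this]; abel
  have hcomm' : Commute e (a - 1) := by
    unfold Commute SemiconjBy
    rw [mul_sub, sub_mul, mul_one, one_mul, hea]
  have hcq : Commute e q := hcomm
  -- q^(n+1) = 0
  have hqn1 : q ^ (n + 1) = 0 := by rw [pow_succ, hqn, zero_mul]
  have h2 : e * (a - 1) ^ (n + 1) = 0 := by
    calc e * (a - 1) ^ (n + 1) = e ^ (n + 1) * (a - 1) ^ (n + 1) := by
          rw [he.pow_succ_eq]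
    _ = (e * (a - 1)) ^ (n + 1) := (hcomm'.mul_pow _).symm
    _ = (e * q) ^ (n + 1) := by rw [h1]
    _ = e ^ (n + 1) * q ^ (n + 1) := hcq.mul_pow _
    _ = 0 := by rw [hqn1, mul_zero]
  have he0 : e = 0 := by
    have hu' : IsUnit ((a - 1) ^ (n + 1)) := hu.pow _
    obtain ⟨v, hv⟩ := hu'
    calc e = e * ((a - 1) ^ (n + 1) * ↑v⁻¹) := by
          rw [← hv, Units.mul_inv, mul_one]
    _ = e * (a - 1) ^ (n + 1) * ↑v⁻¹ := by rw [mul_assoc]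
    _ = 0 := by rw [h2, zero_mul]
  refine ⟨n + 1, ?_⟩
  rw [heq, he0, zero_add, hqn1]
end

section
/- For any nontrivial ring R and any integer n ≥ 2, the full matrix ring M_n(R) of n × n matrices over R is not a CSNC ring. -/
/-!
If `a = e + q` with `e` idempotent, `q` nilpotent and `e q = q e`, then
`a² - a = q (2e + q - 1)` is nilpotent. So a unit `u` with `u² - u` a nonzero idempotent is
clean (`u = 0 + u`) but not strongly nil-clean. In `Mₙ(R)` with `n ≥ 2` the unit
`u = fibBlock 0 1` has `u² - u = E₀₀ + E₁₁`.
-/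

theorem IsCleanElem.of_isUnit {R : Type*} [Ring R] {u : R} (hu : IsUnit u) : IsCleanElem u :=
  ⟨0, u, .zero, hu, (zero_add u).symm⟩

theorem IsStronglyNilCleanElem.isNilpotent_mul_self_sub {R : Type*} [Ring R] {a : R}
    (ha : IsStronglyNilCleanElem a) : IsNilpotent (a * a - a) := by
  obtain ⟨e, q, he, hq, heq, rfl⟩ := ha
  have hqe : Commute q e := heq.symm
  have hfactor : (e + q) * (e + q) - (e + q) = q * (e + e + q - 1) := by
    rw [mul_add, add_mul, add_mul, he.eq, heq]
    noncomm_ring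
  have hcomm : Commute q (e + e + q - 1) :=
    ((hqe.add_right hqe).add_right (.refl q)).sub_right (.one_right q)
  exact hfactor ▸ hcomm.isNilpotent_mul_right hq

theorem not_isCSNCRing_of_isUnit_of_mul_self_sub_eq {R : Type*} [Ring R] {u e : R}
    (hu : IsUnit u) (he : IsIdempotentElem e) (he0 : e ≠ 0) (hue : u * u - u = e) :
    ¬ IsCSNCRing R := fun hR =>
  he0 (he.eq_zero_of_isNilpotent (hue ▸ (hR u (.of_isUnit hu)).isNilpotent_mul_self_sub))

namespace Matrix

variable {ι R : Type*} [DecidableEq ι] [Ring R] {i j : ι}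

theorem single_one_add_single_one_ne_zero [Nontrivial R] (hij : i ≠ j) :
    single i i (1 : R) + single j j 1 ≠ 0 := fun h => by
  simpa [hij.symm] using congrFun (congrFun h i) i

variable [Fintype ι]

/-- The block `[[0, 1], [1, 1]]` in rows and columns `i, j`, the identity elsewhere. -/
def fibBlock (i j : ι) : Matrix ι ι R :=
  1 - single i i 1 + single i j 1 + single j i 1

theorem fibBlock_mul_self_sub (hij : i ≠ j) :
    fibBlock i j * fibBlock i j - fibBlock i j = single i i (1 : R) + single j j 1 := by
  simp only [fibBlock, mul_add, add_mul, sub_mul, mul_sub, mul_one, one_mul,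
    single_mul_single_same, single_mul_single_of_ne, hij, hij.symm, ne_eq, not_false_eq_true]
  abel

theorem isUnit_fibBlock (hij : i ≠ j) : IsUnit (fibBlock i j : Matrix ι ι R) := by
  let v : Matrix ι ι R :=
    1 - single i i 1 - single i i 1 - single j j 1 + single i j 1 + single j i 1
  refine ⟨⟨fibBlock i j, v, ?_, ?_⟩, rfl⟩ <;>
  · simp only [fibBlock, v, mul_add, add_mul, sub_mul, mul_sub, mul_one, one_mul,
      single_mul_single_same, single_mul_single_of_ne, hij, hij.symm, ne_eq, not_false_eq_true]
    abel

theorem isIdempotentElem_single_one_add_single_one (hij : i ≠ j) :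
    IsIdempotentElem (single i i (1 : R) + single j j 1) := by
  simp only [IsIdempotentElem, mul_add, add_mul, single_mul_single_same,
    single_mul_single_of_ne, hij, hij.symm, ne_eq, not_false_eq_true, mul_one]
  abel

end Matrix

theorem stmt_6 (R : Type*) [Ring R] [Nontrivial R] (n : ℕ) (hn : 2 ≤ n) :
    ¬ IsCSNCRing (Matrix (Fin n) (Fin n) R) := by
  have h01 : (⟨0, by omega⟩ : Fin n) ≠ ⟨1, by omega⟩ := by simp
  exact not_isCSNCRing_of_isUnit_of_mul_self_sub_eq (Matrix.isUnit_fibBlock h01)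
    (Matrix.isIdempotentElem_single_one_add_single_one h01)
    (Matrix.single_one_add_single_one_ne_zero h01) (Matrix.fibBlock_mul_self_sub h01)
end

section
/- A ring R is strongly nil-clean (i.e., every element of R is strongly nil-clean) if and only if R is both a CSNC ring and a semi-potent ring. -/
/-- A ring is *semi-potent* if every left ideal not contained in the Jacobson radical
contains a nonzero idempotent. -/
def IsSemipotentRing (R : Type*) [Ring R] : Prop :=
  ∀ I : Ideal R, ¬ I ≤ (⊥ : Ideal R).jacobson → ∃ e ∈ I, e ≠ 0 ∧ IsIdempotentElem e

/-!
A strongly nil-clean ring is CSNC trivially, and semi-potent because the idempotent part `e` of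
`x = e + q` equals `(1 + q)⁻¹ e x ∈ R x`, and is nonzero whenever `1 - x` has no left inverse.

Conversely, the clean element `u = 0 + u` shows that in a CSNC ring `u - 1` is nilpotent for
every unit `u` (a UU ring). Units lift modulo the Jacobson radical `J`, so `R ⧸ J` is again UU,
and by semi-potency every nonzero principal left ideal of `R ⧸ J` contains a nonzero idempotent.
A UU ring has no nonzero `2 × 2` matrix units, so `R ⧸ J` has no nonzero square-zero elements
and is reduced. In a reduced UU ring idempotents are central and `1` is the only unit, which
forces `a * a = a`. Hence `a - a * a ∈ J`, which is nil, and an element `a` with `a - a * a`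
nilpotent is strongly nil-clean: lift the image of `a` in `ℤ[a] ⧸ nilradical`, a commutative
ring.
-/

def IsUURing (R : Type*) [Ring R] : Prop :=
  ∀ u : R, IsUnit u → IsNilpotent (u - 1)

section

variable {R : Type*} [Ring R]

open scoped IsMulCommutative in
theorem IsNilpotent.isStronglyNilCleanElem {a : R} (h : IsNilpotent (a - a * a)) :
    IsStronglyNilCleanElem a := by
  have := Subring.isMulCommutative_closure (s := {a}) (by simp)
  set C := Subring.closure {a}
  let x : C := ⟨a, Subring.subset_closure rfl⟩
  let π := Ideal.Quotient.mk (nilradical C)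
  have hx : IsNilpotent (x - x * x) := (IsNilpotent.map_iff C.subtype_injective).mp h
  have hπx : IsIdempotentElem (π x) := by
    rw [IsIdempotentElem, ← map_mul, eq_comm, Ideal.Quotient.mk_eq_mk_iff_sub_mem]
    exact mem_nilradical.mpr hx
  obtain ⟨e, he, hex⟩ := exists_isIdempotentElem_eq_of_ker_isNilpotent π
    (fun y hy => mem_nilradical.mp (Ideal.Quotient.eq_zero_iff_mem.mp hy)) _ ⟨x, rfl⟩ hπx
  have hq : IsNilpotent (x - e) :=
    mem_nilradical.mp ((Ideal.Quotient.mk_eq_mk_iff_sub_mem _ _).mp hex.symm)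
  exact ⟨e, a - e, he.map C.subtype, hq.map C.subtype,
    congrArg Subtype.val (mul_comm e (x - e)), (add_sub_cancel _ _).symm⟩

theorem IsIdempotentElem.exists_mul_add_eq {e q : R} (he : IsIdempotentElem e)
    (hq : IsNilpotent q) (hc : Commute e q) : ∃ r, r * (e + q) = e := by
  obtain ⟨u, hu⟩ := hq.isUnit_one_add
  refine ⟨↑u⁻¹ * e, ?_⟩
  calc ↑u⁻¹ * e * (e + q) = ↑u⁻¹ * (e * (1 + q)) := by
        rw [mul_assoc, mul_add, he.eq, mul_one_add]
    _ = e := by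
        rw [((Commute.one_right e).add_right hc).eq, ← hu, ← mul_assoc, u.inv_mul, one_mul]

theorem isSemipotentRing_of_forall_isStronglyNilCleanElem
    (h : ∀ a : R, IsStronglyNilCleanElem a) : IsSemipotentRing R := by
  intro I hI
  obtain ⟨a, haI, haJ⟩ := SetLike.not_le_iff_exists.mp hI
  obtain ⟨y, hy⟩ : ∃ y, ∀ z, z * y * a + z - 1 ≠ 0 := by
    simpa [Ideal.mem_jacobson_iff] using haJ
  obtain ⟨e, q, he, hq, hc, hx⟩ := h (-(y * a))
  obtain ⟨r, hr⟩ := he.exists_mul_add_eq hq hc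
  refine ⟨e, hr ▸ hx ▸ I.mul_mem_left r (I.neg_mem (I.mul_mem_left y haI)), ?_, he⟩
  rintro rfl
  obtain ⟨z, hz⟩ := hq.isUnit_one_sub.exists_left_inv
  apply hy z
  rw [zero_add] at hx
  rw [← hz, ← hx]
  noncomm_ring

theorem IsCSNCRing.isUURing (h : IsCSNCRing R) : IsUURing R := by
  intro u hu
  obtain ⟨e, q, he, hq, hc, rfl⟩ := h u ⟨0, u, .zero, hu, (zero_add u).symm⟩
  have hcomm : Commute (-q) (e + q) := ((Commute.symm hc).add_right (.refl q)).neg_left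
  have he1 : e = 1 := by
    refine (IsIdempotentElem.iff_eq_one_of_isUnit ?_).mp he
    simpa using hq.neg.isUnit_add_left_of_commute hu hcomm
  simpa [he1] using hq

namespace IsUURing

theorem eq_zero_of_matrixUnits (h : IsUURing R) {f x y : R} (hf : IsIdempotentElem f)
    (hfx : f * x = x) (hxf : x * f = 0) (hyf : y * f = y) (hfy : f * y = 0) (hxy : x * y = f) :
    f = 0 := by
  have hxx : x * x = 0 :=
    calc x * x = x * (f * x) := by rw [hfx]
      _ = 0 := by rw [← mul_assoc, hxf, zero_mul]
  have hyy : y * y = 0 :=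
    calc y * y = y * f * y := by rw [hyf]
      _ = 0 := by rw [mul_assoc, hfy, mul_zero]
  -- `f, x, y, y * x` are matrix units of a copy of `M₂` with identity `e`, in which
  -- `d = [[-1, 1], [1, 0]]` satisfies `d² + d = 1`.
  set d := x + y - f with hd_def
  set e := f + y * x with he_def
  have hde : d * e = d := by
    have : d * e = x * f + x * y * x + y * f + y * y * x - f * f - f * y * x := by
      rw [hd_def, he_def]; noncomm_ring
    rw [this, hxf, hxy, hfx, hyf, hyy, hf.eq, hfy, hd_def]
    noncomm_ring
  have hed : e * d = d := by
    have : e * d = f * x + f * y - f * f + y * (x * x) + y * (x * y) - y * (x * f) := by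
      rw [hd_def, he_def]; noncomm_ring
    rw [this, hfx, hfy, hf.eq, hxx, hxy, hyf, hxf, hd_def]
    noncomm_ring
  have hdd : d * (d + 1) = e := by
    have : d * (d + 1) = x * x + x * y - x * f + y * x + y * y - y * f - f * x - f * y + f * f
        + (x + y - f) := by rw [hd_def]; noncomm_ring
    rw [this, hxx, hxy, hxf, hyy, hyf, hfx, hfy, hf.eq, he_def]
    noncomm_ring
  have he : IsIdempotentElem e := by
    have : e * e = f * f + f * y * x + y * (x * f) + y * (x * y) * x := by
      rw [he_def]; noncomm_ring
    rw [IsIdempotentElem, this, hf.eq, hfy, hxf, hxy, hyf, he_def]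
    noncomm_ring
  have hunit : IsUnit (1 + d) := by
    refine isUnit_iff_exists.mpr ⟨1 + d - e, ?_, ?_⟩
    · calc (1 + d) * (1 + d - e) = 1 + (d * (d + 1) - e) + (d - d * e) := by noncomm_ring
        _ = 1 := by rw [hdd, hde]; noncomm_ring
    · calc (1 + d - e) * (1 + d) = 1 + (d * (d + 1) - e) + (d - e * d) := by noncomm_ring
        _ = 1 := by rw [hdd, hed]; noncomm_ring
  have hd : IsNilpotent d := by simpa using h _ hunit
  have he0 : e = 0 := he.eq_zero_of_isNilpotent <|
    hdd ▸ ((Commute.refl d).add_right (.one_right d)).isNilpotent_mul_right hd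
  calc f = f * e := by rw [mul_add, hf.eq, ← mul_assoc, hfy, zero_mul, add_zero]
    _ = 0 := by rw [he0, mul_zero]

theorem mul_eq_zero_of_mul_self_eq_zero (h : IsUURing R) {w z : R} (hz : z * z = 0)
    (hf : IsIdempotentElem (w * z)) : w * z = 0 := by
  set f := w * z
  have hfz : f * z = 0 := by rw [mul_assoc, hz, mul_zero]
  refine h.eq_zero_of_matrixUnits hf (x := f * w * (1 - f)) (y := z * f) ?_ ?_ ?_ ?_ ?_
  · rw [← mul_assoc, ← mul_assoc, hf.eq]
  · rw [mul_assoc, sub_mul, one_mul, hf.eq, sub_self, mul_zero]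
  · rw [mul_assoc, hf.eq]
  · rw [← mul_assoc, hfz, zero_mul]
  · calc f * w * (1 - f) * (z * f) = f * (w * z) * f - f * w * (f * z) * f := by noncomm_ring
      _ = f := by rw [hfz, mul_zero, zero_mul, sub_zero, hf.eq, hf.eq]

theorem isReduced (h : IsUURing R)
    (hpot : ∀ z : R, z ≠ 0 → ∃ r, r * z ≠ 0 ∧ IsIdempotentElem (r * z)) :
    IsReduced R := by
  refine (isReduced_iff_pow_one_lt 2 one_lt_two).mpr fun z hz => ?_
  by_contra hz0
  obtain ⟨r, hr0, hr⟩ := hpot z hz0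
  exact hr0 (h.mul_eq_zero_of_mul_self_eq_zero (by rwa [← sq]) hr)

end IsUURing

namespace IsReduced

variable [IsReduced R]

theorem commute_of_isIdempotentElem {g : R} (hg : IsIdempotentElem g) (c : R) : Commute g c := by
  have corner_eq_zero : ∀ a b : R, b * a = 0 → a * c * b = 0 := fun a b hab =>
    IsReduced.eq_zero _ ⟨2, by rw [sq, mul_assoc, ← mul_assoc b, ← mul_assoc b, hab]; simp⟩
  have h1 : g * c * (1 - g) = 0 :=
    corner_eq_zero _ _ (by rw [sub_mul, one_mul, hg.eq, sub_self])
  have h2 : (1 - g) * c * g = 0 :=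
    corner_eq_zero _ _ (by rw [mul_sub, mul_one, hg.eq, sub_self])
  have : g * c - c * g = g * c * (1 - g) - (1 - g) * c * g := by noncomm_ring
  exact sub_eq_zero.mp (by rw [this, h1, h2, sub_zero])

instance isDedekindFiniteMonoid : IsDedekindFiniteMonoid R where
  mul_eq_one_symm {u v} huv := by
    have he : IsIdempotentElem (v * u) := by
      rw [IsIdempotentElem, mul_assoc, ← mul_assoc u, huv, one_mul]
    calc v * u = v * u * (u * v) := by rw [huv, mul_one]
      _ = u * (v * u) * v := by rw [← mul_assoc, (commute_of_isIdempotentElem he u).eq]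
      _ = 1 := by rw [← mul_assoc, huv, one_mul, huv]

end IsReduced

theorem IsUURing.eq_one_of_isUnit [IsReduced R] (h : IsUURing R) {u : R} (hu : IsUnit u) :
    u = 1 :=
  sub_eq_zero.mp (IsReduced.eq_zero _ (h u hu))

theorem IsUURing.mul_self_eq (h : IsUURing R)
    (hpot : ∀ z : R, z ≠ 0 → ∃ r, r * z ≠ 0 ∧ IsIdempotentElem (r * z)) (a : R) :
    a * a = a := by
  have := h.isReduced hpot
  by_contra hne
  obtain ⟨r, hg0, hg⟩ := hpot (a - a * a) (sub_ne_zero.mpr (Ne.symm hne))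
  set g := r * (a - a * a) with hg_def
  have hcomm := IsReduced.commute_of_isIdempotentElem hg
  have hg_ga : g * (g * a) = g * a := by rw [← mul_assoc, hg.eq]
  have hga_sq : g * a * (g * a) = g * (a * a) :=
    calc g * a * (g * a) = g * (a * g) * a := by noncomm_ring
      _ = g * (a * a) := by rw [← (hcomm a).eq, ← mul_assoc, hg.eq, mul_assoc]
  have hgr_inv : g * r * (g * a - g * a * (g * a)) = g :=
    calc g * r * (g * a - g * a * (g * a)) = g * (r * g) * (a - a * a) := by
          rw [hga_sq]; noncomm_ring
      _ = g := by rw [← (hcomm r).eq, ← mul_assoc, hg.eq, mul_assoc, ← hg_def, hg.eq]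
  have hleft : (1 - g + g * r * (g * a)) * (1 - g * a) = 1 :=
    calc (1 - g + g * r * (g * a)) * (1 - g * a)
        = 1 - g * a - g + g * (g * a) + g * r * (g * a - g * a * (g * a)) := by noncomm_ring
      _ = 1 := by rw [hg_ga, hgr_inv]; noncomm_ring
  have hga : g * a = 0 := by
    simpa using h.eq_one_of_isUnit (IsUnit.of_mul_eq_one_right _ hleft)
  apply hg0
  rw [← hgr_inv, hga, mul_zero, sub_zero, mul_zero]

namespace Ideal

theorem isUnit_one_add_of_mem_jacobson_bot {x : R} (hx : x ∈ (⊥ : Ideal R).jacobson) :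
    IsUnit (1 + x) := by
  have left_inv : ∀ y ∈ (⊥ : Ideal R).jacobson, ∃ s, s * (y + 1) = 1 := fun y hy => by
    obtain ⟨s, hs⟩ := exists_mul_add_sub_mem_of_mem_jacobson y hy
    exact ⟨s, sub_eq_zero.mp hs⟩
  obtain ⟨s, hs⟩ := left_inv x hx
  have hs1 : s - 1 = -s * x := by rw [← hs]; noncomm_ring
  obtain ⟨t, ht⟩ := left_inv (s - 1) (hs1 ▸ mul_mem_left _ _ hx)
  rw [sub_add_cancel] at ht
  have htx : t = x + 1 :=
    calc t = t * (s * (x + 1)) := by rw [hs, mul_one]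
      _ = x + 1 := by rw [← mul_assoc, ht, one_mul]
  rw [add_comm]
  exact isUnit_iff_exists.mpr ⟨s, htx ▸ ht, hs⟩

theorem isUnit_of_isUnit_mk_jacobson_bot {x : R}
    (hx : IsUnit (Quotient.mk (⊥ : Ideal R).jacobson x)) : IsUnit x := by
  have isUnit_of_mk_eq_one : ∀ z, Quotient.mk (⊥ : Ideal R).jacobson z = 1 → IsUnit z :=
    fun z hz => by
      simpa using isUnit_one_add_of_mem_jacobson_bot
        ((Quotient.mk_eq_mk_iff_sub_mem z 1).mp (by rw [hz, map_one]))
  obtain ⟨y, hxy, hyx⟩ := isUnit_iff_exists.mp hx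
  obtain ⟨y, rfl⟩ := Quotient.mk_surjective y
  obtain ⟨b, hb⟩ := (isUnit_of_mk_eq_one (x * y) (by rw [map_mul, hxy])).exists_right_inv
  obtain ⟨c, hc⟩ := (isUnit_of_mk_eq_one (y * x) (by rw [map_mul, hyx])).exists_left_inv
  exact isUnit_iff_exists_and_exists.mpr
    ⟨⟨y * b, by rw [← mul_assoc, hb]⟩, ⟨c * y, by rw [mul_assoc, hc]⟩⟩

end Ideal

theorem IsIdempotentElem.eq_zero_of_mem_jacobson_bot {e : R} (he : IsIdempotentElem e)
    (hJ : e ∈ (⊥ : Ideal R).jacobson) : e = 0 := by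
  obtain ⟨v, hv⟩ := (Ideal.isUnit_one_add_of_mem_jacobson_bot (neg_mem hJ)).exists_left_inv
  calc e = v * (1 + -e) * e := by rw [hv, one_mul]
    _ = v * (e - e * e) := by noncomm_ring
    _ = 0 := by rw [he.eq, sub_self, mul_zero]

theorem IsSemipotentRing.exists_isIdempotentElem_mul_quotient (h : IsSemipotentRing R)
    {z : R ⧸ (⊥ : Ideal R).jacobson} (hz : z ≠ 0) :
    ∃ r, r * z ≠ 0 ∧ IsIdempotentElem (r * z) := by
  obtain ⟨z, rfl⟩ := Ideal.Quotient.mk_surjective z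
  have hspan : ¬ Ideal.span {z} ≤ (⊥ : Ideal R).jacobson := fun hle =>
    hz (Ideal.Quotient.eq_zero_iff_mem.mpr (hle (Ideal.mem_span_singleton_self z)))
  obtain ⟨e, heI, he0, he⟩ := h _ hspan
  obtain ⟨r, rfl⟩ := Ideal.mem_span_singleton'.mp heI
  refine ⟨Ideal.Quotient.mk _ r, ?_, ?_⟩
  · rw [← map_mul, Ne, Ideal.Quotient.eq_zero_iff_mem]
    exact fun hJ => he0 (he.eq_zero_of_mem_jacobson_bot hJ)
  · rw [← map_mul]
    exact he.map _

namespace IsUURing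

theorem isNilpotent_of_mem_jacobson_bot (h : IsUURing R) {x : R}
    (hx : x ∈ (⊥ : Ideal R).jacobson) : IsNilpotent x := by
  simpa using h _ (Ideal.isUnit_one_add_of_mem_jacobson_bot hx)

theorem quotient_jacobson_bot (h : IsUURing R) : IsUURing (R ⧸ (⊥ : Ideal R).jacobson) := by
  intro u hu
  obtain ⟨u, rfl⟩ := Ideal.Quotient.mk_surjective u
  rw [← map_one (Ideal.Quotient.mk _), ← map_sub]
  exact (h u (Ideal.isUnit_of_isUnit_mk_jacobson_bot hu)).map _

end IsUURing

end

theorem stmt_7 (R : Type*) [Ring R] :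
    (∀ a : R, IsStronglyNilCleanElem a) ↔ IsCSNCRing R ∧ IsSemipotentRing R := by
  refine ⟨fun h => ⟨fun a _ => h a, isSemipotentRing_of_forall_isStronglyNilCleanElem h⟩,
    ?_⟩
  rintro ⟨hC, hS⟩ a
  have huu := hC.isUURing
  have hbool := huu.quotient_jacobson_bot.mul_self_eq
    (fun _ hz => hS.exists_isIdempotentElem_mul_quotient hz) (Ideal.Quotient.mk _ a)
  refine IsNilpotent.isStronglyNilCleanElem (huu.isNilpotent_of_mem_jacobson_bot ?_)
  rw [← Ideal.Quotient.eq_zero_iff_mem, map_sub, map_mul, hbool, sub_self]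
end

section
/- A ring R is a CSNC ring if and only if the following two conditions hold: (1) every clean element of R is strongly clean; and (2) R is a UU-ring, i.e., every unit of R equals 1 + q for some nilpotent q of R. -/
/-- An element `a` of a ring is *strongly clean* if `a = e + u` for some idempotent `e`
and unit `u` with `e * u = u * e`. -/
def IsStronglyCleanElem {R : Type*} [Ring R] (a : R) : Prop :=
  ∃ e u : R, IsIdempotentElem e ∧ IsUnit u ∧ e * u = u * e ∧ a = e + u

theorem stmt_9 (R : Type*) [Ring R] :
    IsCSNCRing R ↔
      (∀ a : R, IsCleanElem a → IsStronglyCleanElem a) ∧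
        (∀ u : R, IsUnit u → ∃ q : R, IsNilpotent q ∧ u = 1 + q) := by
  constructor
  · intro h
    constructor
    · intro a ha
      obtain ⟨e, q, he, hq, hcomm, rfl⟩ := h a ha
      have he' : e * e = e := he
      -- e + q = (1-e) + (2e - 1 + q)
      refine ⟨1 - e, 2 * e - 1 + q, ?_, ?_, ?_, by noncomm_ring⟩
      · show (1 - e) * (1 - e) = 1 - e
        noncomm_ring [he']
      · -- 2e - 1 is a unit (self-inverse), q is a commuting nilpotent
        have hinv : (2 * e - 1) * (2 * e - 1) = 1 := by
          noncomm_ring [he']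
        have hu : IsUnit (2 * e - 1) := ⟨⟨_, _, hinv, hinv⟩, rfl⟩
        refine hq.isUnit_add_left_of_commute hu ?_
        show q * (2 * e - 1) = (2 * e - 1) * q
        noncomm_ring [hcomm]
      · noncomm_ring [he', hcomm]
    · intro u hu
      obtain ⟨e, q, he, hq, hcomm, heq⟩ := h u ⟨0, u, IsIdempotentElem.zero, hu, (zero_add u).symm⟩
      -- u = e + q, so e = u - q is a unit, and an idempotent unit is 1
      have hcq : Commute q u := by
        show q * u = u * q
        rw [heq]
        noncomm_ring [hcomm]
      have heu : IsUnit e := by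
        have h' : e = -q + u := by rw [heq]; abel
        rw [h']
        exact hq.neg.isUnit_add_right_of_commute hu hcq.neg_left
      have he1 : e = 1 := by
        obtain ⟨v, hv⟩ := heu
        have he' : e * e = e := he
        calc e = (↑v⁻¹ * v : R) * e := by rw [Units.inv_mul, one_mul]
          _ = ↑v⁻¹ * (e * e) := by rw [hv, mul_assoc]
          _ = ↑v⁻¹ * v := by rw [he', hv]
          _ = 1 := Units.inv_mul v
      exact ⟨q, hq, by rw [heq, he1]⟩
  · rintro ⟨h1, h2⟩ a ha
    -- 2 is nilpotent, since -1 = 1 + t for some nilpotent t forces t = -2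
    obtain ⟨t, ht, ht2⟩ := h2 (-1) ⟨-1, rfl⟩
    have htt : t = -2 := by
      have h' := ht2.symm
      rw [add_comm, ← eq_sub_iff_add_eq] at h'
      rw [h']; norm_num
    have h2nil : IsNilpotent (2 : R) := by
      have h' := ht.neg
      rwa [htt, neg_neg] at h'
    obtain ⟨e, u, he, hu, hcomm, rfl⟩ := h1 a ha
    obtain ⟨q, hq, rfl⟩ := h2 u hu
    have he' : e * e = e := he
    -- e commutes with q
    have hceq : e * q = q * e := by
      have h' := hcomm
      rw [mul_add, add_mul, mul_one, one_mul] at h'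
      exact add_left_cancel h'
    -- e + (1 + q) = (1 - e) + (2e + q)
    refine ⟨1 - e, 2 * e + q, ?_, ?_, ?_, by noncomm_ring⟩
    · show (1 - e) * (1 - e) = 1 - e
      noncomm_ring [he']
    · refine Commute.isNilpotent_add ?_ ?_ hq
      · show 2 * e * q = q * (2 * e)
        noncomm_ring [hceq]
      · obtain ⟨n, hn⟩ := h2nil
        refine ⟨n, ?_⟩
        rw [Commute.mul_pow (Commute.ofNat_left 2 e), hn, zero_mul]
    · noncomm_ring [he', hceq]
end

section
/- A ring R is a CUNC ring (i.e., every clean element of R is uniquely nil-clean) if and only if R is an abelian CSNC ring, i.e., every idempotent of R is central and every clean element of R is strongly nil-clean. -/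
/-- An element `a` of a ring is *uniquely nil-clean* if there is a unique idempotent `e`
with `a - e` nilpotent. -/
def IsUniquelyNilCleanElem {R : Type*} [Ring R] (a : R) : Prop :=
  ∃! e : R, IsIdempotentElem e ∧ IsNilpotent (a - e)

/-!
Every idempotent `e` is clean, as `e = (1 - e) + (2e - 1)` with `(2e - 1)² = 1`. If `e` is
moreover uniquely nil-clean, then for every `r` the perturbations `e + e r (1 - e)` and
`e + (1 - e) r e` are idempotents at square-zero distance from `e`, so they equal `e`; this
forces `e r = e r e = r e`. Once all idempotents are central, every nil-clean decomposition is
strongly nil-clean, and two idempotents at nilpotent distance commute and hence coincide.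
-/

section

variable {R : Type*} [Ring R]

lemma IsIdempotentElem.isCleanElem {e : R} (he : IsIdempotentElem e) : IsCleanElem e := by
  have hu : (2 * e - 1) * (2 * e - 1) = 1 := by
    have h : (2 * e - 1) * (2 * e - 1) = 4 * (e * e) - 4 * e + 1 := by noncomm_ring
    rw [h, he.eq]
    abel
  exact ⟨1 - e, 2 * e - 1, he.one_sub, ⟨⟨_, _, hu, hu⟩, rfl⟩, by noncomm_ring⟩

lemma IsIdempotentElem.add_of_mul_self_eq_zero {e x : R} (he : IsIdempotentElem e)
    (hxx : x * x = 0) (hx : e * x + x * e = x) : IsIdempotentElem (e + x) := by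
  rw [IsIdempotentElem, mul_add, add_mul, add_mul, he.eq, hxx, add_zero, add_assoc,
    add_comm (x * e), hx]

lemma IsIdempotentElem.eq_zero_of_isUniquelyNilCleanElem {e x : R} (he : IsIdempotentElem e)
    (hu : IsUniquelyNilCleanElem e) (hxx : x * x = 0) (hx : e * x + x * e = x) : x = 0 := by
  have hnil : IsNilpotent (e - (e + x)) := ⟨2, by rw [sub_add_cancel_left, neg_sq, sq, hxx]⟩
  have h := hu.unique ⟨he.add_of_mul_self_eq_zero hxx hx, hnil⟩ ⟨he, by simp⟩
  simpa using h

lemma IsIdempotentElem.commute_of_isUniquelyNilCleanElem {e : R} (he : IsIdempotentElem e)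
    (hu : IsUniquelyNilCleanElem e) (r : R) : Commute e r := by
  have h₁ : e * r * (1 - e) = 0 := by
    refine he.eq_zero_of_isUniquelyNilCleanElem hu ?_ ?_
    · simp only [mul_assoc, ← mul_assoc (1 - e) e, he.one_sub_mul_self, zero_mul, mul_zero]
    · simp only [← mul_assoc, he.eq, mul_assoc _ (1 - e) e, he.one_sub_mul_self, mul_zero,
        add_zero]
  have h₂ : (1 - e) * r * e = 0 := by
    refine he.eq_zero_of_isUniquelyNilCleanElem hu ?_ ?_
    · simp only [mul_assoc, ← mul_assoc e (1 - e), he.mul_one_sub_self, zero_mul, mul_zero]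
    · simp only [← mul_assoc, he.mul_one_sub_self, zero_mul, zero_add, mul_assoc _ e e, he.eq]
  have hl : e * r = e * r * e := by rwa [mul_one_sub, sub_eq_zero] at h₁
  have hr : r * e = e * r * e := by rwa [one_sub_mul, sub_mul, sub_eq_zero] at h₂
  exact hl.trans hr.symm

lemma IsUniquelyNilCleanElem.isStronglyNilCleanElem
    (hab : ∀ e : R, IsIdempotentElem e → ∀ r : R, e * r = r * e) {a : R}
    (ha : IsUniquelyNilCleanElem a) : IsStronglyNilCleanElem a := by
  obtain ⟨e, ⟨he, hn⟩, -⟩ := ha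
  exact ⟨e, a - e, he, hn, hab e he _, (add_sub_cancel e a).symm⟩

lemma IsStronglyNilCleanElem.isUniquelyNilCleanElem
    (hab : ∀ e : R, IsIdempotentElem e → ∀ r : R, e * r = r * e) {a : R}
    (ha : IsStronglyNilCleanElem a) : IsUniquelyNilCleanElem a := by
  obtain ⟨e, q, he, hq, -, rfl⟩ := ha
  refine ⟨e, ⟨he, by simpa using hq⟩, fun f ⟨hf, hfn⟩ => ?_⟩
  have hcomm : Commute (e + q - f) q :=
    (Commute.add_left (hab e he q) (Commute.refl q)).sub_left (hab f hf q)
  have hnil : IsNilpotent (e - f) := by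
    have h := hcomm.isNilpotent_sub hfn hq
    rwa [add_sub_right_comm, add_sub_cancel_right] at h
  exact (eq_of_isNilpotent_sub_of_isIdempotentElem_of_commute he hf hnil (hab e he f)).symm

end

theorem stmt_10 (R : Type*) [Ring R] :
    (∀ a : R, IsCleanElem a → IsUniquelyNilCleanElem a) ↔
      (∀ e : R, IsIdempotentElem e → ∀ r : R, e * r = r * e) ∧ IsCSNCRing R := by
  constructor
  · intro h
    have hab : ∀ e : R, IsIdempotentElem e → ∀ r : R, e * r = r * e := fun e he =>
      he.commute_of_isUniquelyNilCleanElem (h e he.isCleanElem)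
    exact ⟨hab, fun a ha => IsUniquelyNilCleanElem.isStronglyNilCleanElem hab (h a ha)⟩
  · rintro ⟨hab, hcsnc⟩ a ha
    exact IsStronglyNilCleanElem.isUniquelyNilCleanElem hab (hcsnc a ha)
end

section
/- For a natural number n ≥ 1, the ring Z/nZ of integers modulo n is a CSNC ring if and only if n = 2^m for some natural number m. -/
lemma nilp_of_even (m k : ℕ) (hk : 2 ∣ k) : IsNilpotent ((k : ZMod (2 ^ m))) := by
  obtain ⟨j, rfl⟩ := hk
  refine ⟨m, ?_⟩
  have h2 : (2 : ZMod (2 ^ m)) ^ m = 0 := by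
    have := ZMod.natCast_self (2 ^ m)
    push_cast at this
    exact this
  push_cast
  rw [mul_pow, h2, zero_mul]

theorem stmt_13 (n : ℕ) (hn : 1 ≤ n) :
    IsCSNCRing (ZMod n) ↔ ∃ m : ℕ, n = 2 ^ m := by
  constructor
  · intro h
    by_contra hc
    -- n has an odd prime factor
    have : ∃ p : ℕ, p.Prime ∧ p ∣ n ∧ p ≠ 2 := by
      by_contra hp
      push_neg at hp
      exact hc ⟨n.primeFactorsList.length,
        Nat.eq_prime_pow_of_unique_prime_dvd (by omega)
          (fun {d} hd hdn => hp d hd hdn)⟩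
    obtain ⟨p, hp, hpn, hp2⟩ := this
    have : Fact p.Prime := ⟨hp⟩
    have hclean : IsCleanElem (2 : ZMod n) :=
      ⟨1, 1, by simp [IsIdempotentElem], isUnit_one, by norm_num⟩
    obtain ⟨e, q, he, hq, -, heq⟩ := h 2 hclean
    set f := ZMod.castHom hpn (ZMod p) with hf
    have hfe : IsIdempotentElem (f e) := by
      simpa [IsIdempotentElem, ← map_mul] using congrArg f he
    have hfq : f q = 0 := (hq.map f).eq_zero
    have h2 : (2 : ZMod p) = f e + f q := by
      simpa [map_add, map_ofNat] using congrArg f heq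
    rw [hfq, add_zero] at h2
    rcases IsIdempotentElem.iff_eq_zero_or_one.mp hfe with h0 | h1
    · rw [h0] at h2
      have : (p : ℕ) ∣ 2 := by
        have : ((2 : ℕ) : ZMod p) = 0 := by exact_mod_cast h2
        exact (ZMod.natCast_eq_zero_iff 2 p).mp this
      exact hp2 ((Nat.prime_dvd_prime_iff_eq hp Nat.prime_two).mp this)
    · rw [h1] at h2
      have : ((1 : ℕ) : ZMod p) = 0 := by
        have : (1 : ZMod p) = 0 := by linear_combination h2
        exact_mod_cast this
      have := (ZMod.natCast_eq_zero_iff 1 p).mp this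
      simp [Nat.dvd_one] at this
      exact hp.one_lt.ne' this
  · rintro ⟨m, rfl⟩
    intro a _
    rcases Nat.eq_zero_or_pos m with rfl | hm
    · have hs : Subsingleton (ZMod (2 ^ 0)) := by rw [pow_zero]; infer_instance
      exact ⟨0, 0, by simp [IsIdempotentElem], ⟨1, by simp⟩, by simp,
        Subsingleton.elim _ _⟩
    have : NeZero (2 ^ m) := ⟨by positivity⟩
    have hva : ((a.val : ℕ) : ZMod (2 ^ m)) = a := ZMod.natCast_rightInverse a
    rcases Nat.even_or_odd a.val with he | ho
    · refine ⟨0, a, by simp [IsIdempotentElem], ?_, by simp, by simp⟩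
      rw [← hva]
      exact nilp_of_even m a.val he.two_dvd
    · refine ⟨1, a - 1, by simp [IsIdempotentElem], ?_, mul_comm _ _, by ring⟩
      have hv1 : 1 ≤ a.val := ho.pos
      have : a - 1 = ((a.val - 1 : ℕ) : ZMod (2 ^ m)) := by
        rw [Nat.cast_sub hv1, hva, Nat.cast_one]
      rw [this]
      obtain ⟨k, hk⟩ := ho
      exact nilp_of_even m _ (by omega)
end

section
/- If R is a CSNC ring, then R is an NCSUC ring; that is, every nil-clean element of R is uniquely strongly clean. -/
/-- An element `a` of a ring is *nil-clean* if `a = e + q` for some idempotent `e`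
and nilpotent `q`. -/
def IsNilCleanElem {R : Type*} [Ring R] (a : R) : Prop :=
  ∃ e q : R, IsIdempotentElem e ∧ IsNilpotent q ∧ a = e + q

/-! In a CSNC ring every unit `u = 0 + u` is clean, hence strongly nil-clean, and a unit can be
strongly nil-clean only with idempotent `1`; so `u - 1` is nilpotent, and in particular `2` is.
If `a = e + q` is nil-clean, the strongly nil-clean decomposition `f + m` of the clean element
`a + 1 = e + (1 + q)` makes `a - f = m - 1` a unit. Conversely, any idempotent `g` commuting
with `a` with `a - g` a unit yields a strongly nil-clean decomposition of `a` with idempotent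
`1 - g`.
Since `(e + q) ^ k = e * (1 + q) ^ k` for large `k`, such a decomposition has a unique idempotent,
which pins down `g`. -/

namespace IsIdempotentElem

variable {R : Type*} [Ring R] {e f q r : R}

theorem add_pow_of_commute (he : IsIdempotentElem e) (hc : Commute e q) (n : ℕ) :
    (e + q) ^ n = e * (1 + q) ^ n + (1 - e) * q ^ n := by
  induction n with
  | zero => simp
  | succ n ih =>
    set u := (1 + q) ^ n
    set v := q ^ n
    have hue : u * e = e * u := (((Commute.one_left e).add_left hc.symm).pow_left n).eq
    have hve : v * e = e * v := (hc.symm.pow_left n).eq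
    calc (e + q) ^ (n + 1) = e * u * q + e * (u * e) + (1 - e) * (v * e) + (1 - e) * v * q := by
          rw [pow_succ, ih]; noncomm_ring
      _ = e * u * q + e * u + (1 - e) * v * q := by
          rw [hue, hve, ← mul_assoc e, he.eq, ← mul_assoc (1 - e), he.one_sub_mul_self,
            zero_mul, add_zero]
      _ = e * (1 + q) ^ (n + 1) + (1 - e) * q ^ (n + 1) := by
          rw [pow_succ, pow_succ]; noncomm_ring

theorem add_pow_eq_mul_of_pow_eq_zero (he : IsIdempotentElem e) (hc : Commute e q) {k : ℕ}
    (hk : q ^ k = 0) : (e + q) ^ k = e * (1 + q) ^ k := by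
  rw [he.add_pow_of_commute hc, hk, mul_zero, add_zero]

theorem eq_of_mul_isUnit_eq (he : IsIdempotentElem e) (hf : IsIdempotentElem f)
    {u v : R} (hu : IsUnit u) (hv : IsUnit v) (heu : Commute e u) (hfv : Commute f v)
    (h : e * u = f * v) : e = f := by
  obtain ⟨u, rfl⟩ := hu
  obtain ⟨v, rfl⟩ := hv
  have hf_eq : f = e * u * ↑v⁻¹ := by rw [h, Units.mul_inv_cancel_right]
  have he_eq : e = ↑u⁻¹ * (f * v) := by rw [← h, heu.eq, Units.inv_mul_cancel_left]
  have hef_f : e * f = f := by rw [hf_eq, ← mul_assoc, ← mul_assoc, he.eq]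
  have hef_e : e * f = e := by
    rw [he_eq, mul_assoc, mul_assoc, ← hfv.eq, ← mul_assoc f, hf.eq]
  rw [← hef_e, hef_f]

theorem eq_one_of_isUnit_add (he : IsIdempotentElem e) (hq : IsNilpotent q) (hc : Commute e q)
    (hunit : IsUnit (e + q)) : e = 1 := by
  obtain ⟨k, hk⟩ := hq
  have hpow := he.add_pow_eq_mul_of_pow_eq_zero hc hk
  have hu : IsUnit ((1 + q) ^ k) := (IsNilpotent.isUnit_one_add ⟨k, hk⟩).pow k
  exact (iff_eq_one_of_isUnit (hu.mul_right_iff.mp (hpow ▸ hunit.pow k))).mp he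

theorem eq_of_add_eq_add (he : IsIdempotentElem e) (hf : IsIdempotentElem f)
    (hq : IsNilpotent q) (hr : IsNilpotent r) (heq : Commute e q) (hfr : Commute f r)
    (h : e + q = f + r) : e = f := by
  obtain ⟨n, hn⟩ := hq
  obtain ⟨m, hm⟩ := hr
  have hqk : q ^ (n + m) = 0 := pow_eq_zero_of_le (Nat.le_add_right n m) hn
  have hrk : r ^ (n + m) = 0 := pow_eq_zero_of_le (Nat.le_add_left m n) hm
  refine he.eq_of_mul_isUnit_eq hf ((IsNilpotent.isUnit_one_add ⟨n, hn⟩).pow (n + m))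
    ((IsNilpotent.isUnit_one_add ⟨m, hm⟩).pow (n + m))
    (((Commute.one_right e).add_right heq).pow_right (n + m))
    (((Commute.one_right f).add_right hfr).pow_right (n + m)) ?_
  rw [← he.add_pow_eq_mul_of_pow_eq_zero heq hqk, ← hf.add_pow_eq_mul_of_pow_eq_zero hfr hrk, h]

end IsIdempotentElem

namespace IsCSNCRing

variable {R : Type*} [Ring R]

theorem isNilpotent_sub_one_of_isUnit (h : IsCSNCRing R) {u : R} (hu : IsUnit u) :
    IsNilpotent (u - 1) := by
  obtain ⟨e, q, he, hq, hc, rfl⟩ := h u ⟨0, u, .zero, hu, (zero_add u).symm⟩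
  obtain rfl := he.eq_one_of_isUnit_add hq hc hu
  simpa using hq

theorem isNilpotent_two (h : IsCSNCRing R) : IsNilpotent (2 : R) := by
  have h2 : -(-1 - 1 : R) = 2 := by norm_num
  exact h2 ▸ (h.isNilpotent_sub_one_of_isUnit isUnit_one.neg).neg

/-- With `2` nilpotent, `a = (a - g - 1) + 2g + (1 - g)` is a strongly nil-clean decomposition. -/
theorem exists_add_of_isUnit_sub (h : IsCSNCRing R) {a g : R} (hu : IsUnit (a - g))
    (hag : Commute a g) :
    ∃ n : R, IsNilpotent n ∧ Commute (1 - g) n ∧ a = (1 - g) + n := by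
  have hq : IsNilpotent (a - g - 1) := h.isNilpotent_sub_one_of_isUnit hu
  have hgq : Commute g (a - g - 1) :=
    (hag.symm.sub_right (Commute.refl g)).sub_right (Commute.one_right g)
  have h2g : Commute (2 * g) (a - g - 1) := (Commute.ofNat_left 2 _).mul_left hgq
  refine ⟨2 * g + (a - g - 1),
    h2g.isNilpotent_add ((Commute.ofNat_left 2 g).isNilpotent_mul_right h.isNilpotent_two) hq,
    (Commute.one_left _).sub_left
      (((Commute.ofNat_right g 2).mul_right (Commute.refl g)).add_right hgq), by noncomm_ring⟩

theorem eq_of_isUnit_sub (h : IsCSNCRing R) {a f g : R}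
    (hf : IsIdempotentElem f) (hfu : IsUnit (a - f)) (haf : Commute a f)
    (hg : IsIdempotentElem g) (hgu : IsUnit (a - g)) (hag : Commute a g) : f = g := by
  obtain ⟨m, hm, hfm, haf'⟩ := h.exists_add_of_isUnit_sub hfu haf
  obtain ⟨n, hn, hgn, hag'⟩ := h.exists_add_of_isUnit_sub hgu hag
  exact sub_right_injective (hf.one_sub.eq_of_add_eq_add hg.one_sub hm hn hfm hgn (haf' ▸ hag'))

end IsCSNCRing

theorem stmt_18 (R : Type*) [Ring R] (h : IsCSNCRing R) :
    ∀ a : R, IsNilCleanElem a →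
      ∃! f : R, IsIdempotentElem f ∧ IsUnit (a - f) ∧ a * f = f * a := by
  rintro a ⟨e, q, he, hq, rfl⟩
  obtain ⟨f, m, hf, hm, hfm, hsum⟩ :=
    h (e + q + 1) ⟨e, 1 + q, he, hq.isUnit_one_add, by abel⟩
  have ha : e + q = f + m - 1 := eq_sub_of_add_eq hsum
  have hfu : IsUnit (e + q - f) := by
    rw [show e + q - f = m - 1 by rw [ha]; abel]
    exact hm.isUnit_sub_one
  have haf : Commute (e + q) f := by
    rw [ha]
    exact (((Commute.refl f).add_right hfm).sub_right (Commute.one_right f)).symm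
  exact ⟨f, ⟨hf, hfu, haf⟩,
    fun g ⟨hg, hgu, hag⟩ => h.eq_of_isUnit_sub hg hgu hag hf hfu haf⟩
end

section
/- For a ring R, the following are equivalent: (1) R is an NCUC ring, i.e., every nil-clean element of R is uniquely clean; (2) every strongly nil-clean element of R is uniquely clean; (3) every idempotent of R is uniquely clean; (4) R is abelian, i.e., every idempotent of R is central; (5) R is an NCUNC ring, i.e., every nil-clean element of R is uniquely nil-clean. -/
/-- An element `a` of a ring is *uniquely clean* if there is a unique idempotent `e`
with `a - e` a unit. -/
def IsUniquelyCleanElem {R : Type*} [Ring R] (a : R) : Prop :=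
  ∃! e : R, IsIdempotentElem e ∧ IsUnit (a - e)

section AuxNCUC
variable {R : Type*} [Ring R]

/-- A nilpotent element satisfying `x³ = x` is zero. -/
lemma aux_nilp_cube_eq_zero {x : R} (h3 : x * x * x = x) (hn : IsNilpotent x) : x = 0 := by
  obtain ⟨n, hxn⟩ := hn
  have key : ∀ k, x ^ (2 * k + 1) = x := by
    intro k
    induction k with
    | zero => simp
    | succ k ih =>
      have h : 2 * (k + 1) + 1 = (2 * k + 1) + 2 := by ring
      rw [h, pow_add, ih, pow_two, ← mul_assoc, h3]
  have h1 : x ^ (2 * n + 1) = 0 := by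
    have h : 2 * n + 1 = n + (n + 1) := by ring
    rw [h, pow_add, hxn, zero_mul]
  rw [← key n, h1]

lemma aux_sq_idem_sub {e f : R} (he : e * e = e) (hf : f * f = f) (hc : e * f = f * e) :
    (e - f) * (e - f) = e + f - 2 * (e * f) := by
  have h : (e - f) * (e - f) = e * e + f * f - (e * f) - (f * e) := by noncomm_ring
  rw [h, he, hf, hc]; noncomm_ring

lemma aux_cube_idem_sub {e f : R} (he : e * e = e) (hf : f * f = f) (hc : e * f = f * e) :
    (e - f) * (e - f) * (e - f) = e - f := by
  have h2 := aux_sq_idem_sub he hf hc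
  have hefe : (e * f) * e = e * f := by rw [hc, mul_assoc, he]
  have heff : e * (f * f) = e * f := by rw [hf]
  have h3 : (e + f - 2 * (e * f)) * (e - f) = e - f := by
    have h : (e + f - 2 * (e * f)) * (e - f) =
        e * e - e * f + f * e - f * f - 2 * ((e * f) * e) + 2 * (e * (f * f)) := by
      noncomm_ring
    rw [h, hefe, heff, he, hf, hc]; noncomm_ring
  rw [h2, h3]

lemma aux_idem_add {e x : R} (he : e * e = e) (hs : e * x + x * e = x)
    (hxx : x * x = 0) : IsIdempotentElem (e + x) := by
  show (e + x) * (e + x) = e + x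
  have h : (e + x) * (e + x) = e * e + (e * x + x * e) + x * x := by noncomm_ring
  rw [h, he, hs, hxx, add_zero]

lemma aux_sq_unit {e : R} (he : e * e = e) : IsUnit (2 * e - 1) := by
  have hsq : (2 * e - 1) * (2 * e - 1) = 1 := by
    have h : (2 * e - 1) * (2 * e - 1) = 4 * (e * e) - 4 * e + 1 := by noncomm_ring
    rw [h, he]; noncomm_ring
  exact ⟨⟨2 * e - 1, 2 * e - 1, hsq, hsq⟩, rfl⟩

lemma aux_unit_left {e x : R} (he : e * e = e) (hex : e * x = x) (hxe : x * e = 0)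
    (hxx : x * x = 0) : IsUnit (2 * e - 1 + x) := by
  have hsq : (2 * e - 1) * (2 * e - 1) = 1 := by
    have h : (2 * e - 1) * (2 * e - 1) = 4 * (e * e) - 4 * e + 1 := by noncomm_ring
    rw [h, he]; noncomm_ring
  have h1 : (2 * e - 1 + x) * (1 - x) = 2 * e - 1 := by
    have h : (2 * e - 1 + x) * (1 - x) = 2 * e - 1 + 2 * x - 2 * (e * x) - x * x := by
      noncomm_ring
    rw [h, hex, hxx]; noncomm_ring
  have hab : (2 * e - 1 + x) * ((1 - x) * (2 * e - 1)) = 1 := by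
    rw [← mul_assoc, h1, hsq]
  have h2 : (2 * e - 1) * (2 * e - 1 + x) = 1 + x := by
    have h : (2 * e - 1) * (2 * e - 1 + x) =
        4 * (e * e) - 4 * e + 1 + 2 * (e * x) - x := by noncomm_ring
    rw [h, he, hex]; noncomm_ring
  have hba : ((1 - x) * (2 * e - 1)) * (2 * e - 1 + x) = 1 := by
    rw [mul_assoc, h2]
    have h : (1 - x) * (1 + x) = 1 + x - x - x * x := by noncomm_ring
    rw [h, hxx]; noncomm_ring
  exact ⟨⟨2 * e - 1 + x, (1 - x) * (2 * e - 1), hab, hba⟩, rfl⟩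

lemma aux_unit_right {e x : R} (he : e * e = e) (hex : e * x = 0) (hxe : x * e = x)
    (hxx : x * x = 0) : IsUnit (2 * e - 1 + x) := by
  have hsq : (2 * e - 1) * (2 * e - 1) = 1 := by
    have h : (2 * e - 1) * (2 * e - 1) = 4 * (e * e) - 4 * e + 1 := by noncomm_ring
    rw [h, he]; noncomm_ring
  have h1 : (1 - x) * (2 * e - 1 + x) = 2 * e - 1 := by
    have h : (1 - x) * (2 * e - 1 + x) = 2 * e - 1 + 2 * x - 2 * (x * e) - x * x := by
      noncomm_ring
    rw [h, hxe, hxx]; noncomm_ring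
  have hba : ((2 * e - 1) * (1 - x)) * (2 * e - 1 + x) = 1 := by
    rw [mul_assoc, h1, hsq]
  have h2 : (2 * e - 1 + x) * (2 * e - 1) = 1 + x := by
    have h : (2 * e - 1 + x) * (2 * e - 1) =
        4 * (e * e) - 4 * e + 1 + 2 * (x * e) - x := by noncomm_ring
    rw [h, he, hxe]; noncomm_ring
  have hab : (2 * e - 1 + x) * ((2 * e - 1) * (1 - x)) = 1 := by
    rw [← mul_assoc, h2]
    have h : (1 + x) * (1 - x) = 1 + x - x - x * x := by noncomm_ring
    rw [h, hxx]; noncomm_ring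
  exact ⟨⟨2 * e - 1 + x, (2 * e - 1) * (1 - x), hab, hba⟩, rfl⟩

/-- To show an idempotent is central, it suffices to kill the two Peirce corners. -/
lemma aux_central_of_corners {e : R} (he : e * e = e)
    (H : ∀ x : R, e * x = x → x * e = 0 → x * x = 0 → x = 0)
    (H' : ∀ y : R, e * y = 0 → y * e = y → y * y = 0 → y = 0)
    (r : R) : e * r = r * e := by
  set x := e * r - e * r * e with hxdef
  set y := r * e - e * (r * e) with hydef
  have g1 : e * x = x := by
    rw [hxdef]; simp only [mul_sub, ← mul_assoc, he]
  have g2 : x * e = 0 := by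
    rw [hxdef, sub_mul, mul_assoc (e * r) e e, he, sub_self]
  have g3 : x * x = 0 := by
    calc x * x = (e * r) * x - (e * r * e) * x := by rw [hxdef, sub_mul]
      _ = (e * r) * x - (e * r) * (e * x) := by rw [mul_assoc (e * r) e x]
      _ = 0 := by rw [g1, sub_self]
  have ge1 : e * y = 0 := by
    rw [hydef, mul_sub, ← mul_assoc e e (r * e), he, sub_self]
  have ge2 : y * e = y := by
    rw [hydef, sub_mul, mul_assoc e (r * e) e, mul_assoc r e e, he]
  have ge3 : y * y = 0 := by
    calc y * y = y * (r * e) - y * (e * (r * e)) := by rw [hydef, mul_sub]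
      _ = y * (r * e) - (y * e) * (r * e) := by rw [mul_assoc y e (r * e)]
      _ = 0 := by rw [ge2, sub_self]
  have hx := H x g1 g2 g3
  have hy := H' y ge1 ge2 ge3
  rw [hxdef, sub_eq_zero] at hx
  rw [hydef, sub_eq_zero] at hy
  rw [hx, hy, mul_assoc]

end AuxNCUC

theorem stmt_19 (R : Type*) [Ring R] :
    [∀ a : R, IsNilCleanElem a → IsUniquelyCleanElem a,
     ∀ a : R, IsStronglyNilCleanElem a → IsUniquelyCleanElem a,
     ∀ e : R, IsIdempotentElem e → IsUniquelyCleanElem e,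
     ∀ e : R, IsIdempotentElem e → ∀ r : R, e * r = r * e,
     ∀ a : R, IsNilCleanElem a → IsUniquelyNilCleanElem a].TFAE := by
  tfae_have 1 → 2 := by
    intro h a ha
    obtain ⟨e, q, he, hq, -, rfl⟩ := ha
    exact h _ ⟨e, q, he, hq, rfl⟩
  tfae_have 2 → 3 := by
    intro h e he
    exact h e ⟨e, 0, he, ⟨1, by simp⟩, by simp, by simp⟩
  tfae_have 3 → 4 := by
    intro h e he
    apply aux_central_of_corners he
    · intro x hex hxe hxx
      obtain ⟨g, -, hu⟩ := h e he
      have hidem : IsIdempotentElem (e + x) :=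
        aux_idem_add he (by rw [hex, hxe, add_zero]) hxx
      have h1 : (1 : R) - e = g := by
        apply hu
        refine ⟨he.one_sub, ?_⟩
        rw [show e - (1 - e) = 2 * e - 1 + 0 by noncomm_ring]
        exact aux_unit_left he (by simp) (by simp) (by simp)
      have h2 : (1 : R) - (e + x) = g := by
        apply hu
        refine ⟨hidem.one_sub, ?_⟩
        rw [show e - (1 - (e + x)) = 2 * e - 1 + x by noncomm_ring]
        exact aux_unit_left he hex hxe hxx
      have h12 : (1 : R) - (e + x) = 1 - e := h2.trans h1.symm
      have h3 : e + x = e + 0 := by rw [add_zero]; exact sub_right_injective h12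
      exact add_left_cancel h3
    · intro y hey hye hyy
      obtain ⟨g, -, hu⟩ := h e he
      have hidem : IsIdempotentElem (e + y) :=
        aux_idem_add he (by rw [hey, hye, zero_add]) hyy
      have h1 : (1 : R) - e = g := by
        apply hu
        refine ⟨he.one_sub, ?_⟩
        rw [show e - (1 - e) = 2 * e - 1 + 0 by noncomm_ring]
        exact aux_unit_right he (by simp) (by simp) (by simp)
      have h2 : (1 : R) - (e + y) = g := by
        apply hu
        refine ⟨hidem.one_sub, ?_⟩
        rw [show e - (1 - (e + y)) = 2 * e - 1 + y by noncomm_ring]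
        exact aux_unit_right he hey hye hyy
      have h12 : (1 : R) - (e + y) = 1 - e := h2.trans h1.symm
      have h3 : e + y = e + 0 := by rw [add_zero]; exact sub_right_injective h12
      exact add_left_cancel h3
  tfae_have 4 → 1 := by
    intro h a ha
    obtain ⟨e, q, he, hq, rfl⟩ := ha
    have hcq : q * (2 * e - 1) = (2 * e - 1) * q := by
      rw [mul_sub, sub_mul, mul_one, one_mul,
        show q * (2 * e) = 2 * (q * e) by noncomm_ring,
        show (2 * e) * q = 2 * (e * q) by noncomm_ring, h e he q]
    refine ⟨1 - e, ⟨he.one_sub, ?_⟩, ?_⟩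
    · rw [show e + q - (1 - e) = q + (2 * e - 1) by noncomm_ring]
      exact hq.isUnit_add_right_of_commute (aux_sq_unit he) hcq
    · rintro f ⟨hf, hfu⟩
      have hcef : e * f = f * e := h e he f
      have hcom : Commute (-q) (e + q - f) := by
        show (-q) * (e + q - f) = (e + q - f) * (-q)
        rw [neg_mul, mul_neg, neg_inj, mul_sub, sub_mul, mul_add, add_mul,
          h e he q, h f hf q]
      have hunit : IsUnit (e - f) := by
        rw [show e - f = (e + q - f) + -q by abel]
        exact hq.neg.isUnit_add_left_of_commute hfu hcom
      have hcube := aux_cube_idem_sub he hf hcef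
      have hsq1 : (e - f) * (e - f) = 1 := by
        apply hunit.mul_right_cancel
        rw [hcube, one_mul]
      have h5 : e + f - 2 * (e * f) = 1 := (aux_sq_idem_sub he hf hcef).symm.trans hsq1
      have h6 : e * (e + f - 2 * (e * f)) = e * 1 := congrArg (e * ·) h5
      have hh : e * (e + f - 2 * (e * f)) = e * e + e * f - 2 * ((e * e) * f) := by
        noncomm_ring
      rw [hh, he, mul_one] at h6
      have hef0 : e * f = 0 := by
        have h8 : e - e * f = e := by
          rw [show e - e * f = e + e * f - 2 * (e * f) by noncomm_ring]; exact h6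
        rwa [sub_eq_self] at h8
      rw [hef0, mul_zero, sub_zero] at h5
      exact eq_sub_of_add_eq' h5
  tfae_have 4 → 5 := by
    intro h a ha
    obtain ⟨e, q, he, hq, rfl⟩ := ha
    refine ⟨e, ⟨he, by simpa using hq⟩, ?_⟩
    rintro f ⟨hf, hfn⟩
    have hcef : e * f = f * e := h e he f
    have hcom : Commute (e + q - f) q := by
      show (e + q - f) * q = q * (e + q - f)
      rw [mul_sub, sub_mul, mul_add, add_mul, h e he q, h f hf q]
    have hnil : IsNilpotent (e - f) := by
      rw [show e - f = (e + q - f) - q by abel]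
      exact Commute.isNilpotent_sub hcom hfn hq
    have hcube := aux_cube_idem_sub he hf hcef
    have h0 : e - f = 0 := aux_nilp_cube_eq_zero hcube hnil
    rw [sub_eq_zero] at h0
    exact h0.symm
  tfae_have 5 → 4 := by
    intro h e he
    apply aux_central_of_corners he
    · intro x hex hxe hxx
      obtain ⟨g, -, hu⟩ := h e ⟨e, 0, he, ⟨1, by simp⟩, by simp⟩
      have hidem : IsIdempotentElem (e + x) :=
        aux_idem_add he (by rw [hex, hxe, add_zero]) hxx
      have h1 : e = g := hu e ⟨he, by simp⟩
      have h2 : e + x = g := by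
        apply hu
        refine ⟨hidem, ?_⟩
        rw [show e - (e + x) = -x by abel]
        exact ⟨2, by rw [pow_two, neg_mul_neg, hxx]⟩
      have h3 : e + x = e + 0 := by rw [add_zero]; exact h2.trans h1.symm
      exact add_left_cancel h3
    · intro y hey hye hyy
      obtain ⟨g, -, hu⟩ := h e ⟨e, 0, he, ⟨1, by simp⟩, by simp⟩
      have hidem : IsIdempotentElem (e + y) :=
        aux_idem_add he (by rw [hey, hye, zero_add]) hyy
      have h1 : e = g := hu e ⟨he, by simp⟩
      have h2 : e + y = g := by
        apply hu
        refine ⟨hidem, ?_⟩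
        rw [show e - (e + y) = -y by abel]
        exact ⟨2, by rw [pow_two, neg_mul_neg, hyy]⟩
      have h3 : e + y = e + 0 := by rw [add_zero]; exact h2.trans h1.symm
      exact add_left_cancel h3
  tfae_finish
end
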